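/- Let 0 < ε < 1 and suppose R₁ ≥ 0 satisfies |log( sin y / y )| ≤ R₁·y² for all y ∈ (0, ε]. Set c₁ = ∫₀¹ |log(1/t² − 1)|·t·√(log(1/t)) dt and, for x ∈ (0, ε], U₁(x) = x²·∫₀¹ |Î(x,t)|·t·√(log(1 + 1/(x t))) dt. Then for all x ∈ (0, ε]: U₁(x)/( −x²·log x·√(log(1 + 1/x)) ) ≤ (1/√(log(1 + 1/x)))·( log 2/√(log(1/x)) + (c₁ + log 2·√(log(1 + x)))/log(1/x) + (3R₁/8)·x²·( 2/√(log(1/x)) + (√(π/2) + 2·√(log(1 + x)))/log(1/x) ) ). -/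

import Mathlib

open Set

/-- `Î(x,t) = log( sin(x(1−t)/2)·sin(x(1+t)/2) / sin(xt/2)² )`. -/
noncomputable def Ihat (x t : ℝ) : ℝ :=
  Real.log (Real.sin (x * (1 - t) / 2) * Real.sin (x * (1 + t) / 2) / Real.sin (x * t / 2) ^ 2)

/-- `c₁ = ∫₀¹ |log(1/t² − 1)|·t·√(log(1/t)) dt`. -/
noncomputable def c₁ : ℝ :=
  ∫ t in (0:ℝ)..1, |Real.log (1 / t ^ 2 - 1)| * t * Real.sqrt (Real.log (1 / t))

/-- `U₁(x) = x²·∫₀¹ |Î(x,t)|·t·√(log(1 + 1/(xt))) dt`. -/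
noncomputable def U₁ (x : ℝ) : ℝ :=
  x ^ 2 * ∫ t in (0:ℝ)..1, |Ihat x t| * t * Real.sqrt (Real.log (1 + 1 / (x * t)))


/-!
With `a, b, c = x(1−t)/2, x(1+t)/2, xt/2` one has `ab/c² = 1/t² − 1`, so
`Î(x,t) − log(1/t² − 1) = log(sin a/a) + log(sin b/b) − 2 log(sin c/c)`, which is at most
`R₁(a² + b² + 2c²) ≤ (3/2)R₁x²` in absolute value. Since `1 + 1/(xt) ≤ (1 + x)/(xt)`,
subadditivity of `√` gives `√log(1 + 1/(xt)) ≤ √log(1/x) + √log(1 + x) + √log(1/t)`. The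
integrand of `U₁(x)/x²` is thus dominated by a combination of four integrable functions of `t`
with known integrals: `∫₀¹ |log(1/t² − 1)| t dt = log 2`, because `binEntropy(t²)/2` is an
antiderivative of `t log(1/t² − 1)`, which changes sign at `t = 1/√2`;
`∫₀¹ t √log(1/t) dt = Γ(3/2)/2^{3/2} = √(π/2)/4` after substituting `t = e^{−s}`; and the
remaining two are `1/2` and `c₁`.
-/

open Set MeasureTheory Real

lemma sqrt_add_le_add_sqrt {a b : ℝ} (ha : 0 ≤ a) (hb : 0 ≤ b) : √(a + b) ≤ √a + √b :=
  sqrt_le_iff.mpr ⟨by positivity, by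
    nlinarith [sq_sqrt ha, sq_sqrt hb, mul_nonneg (sqrt_nonneg a) (sqrt_nonneg b)]⟩

lemma log_one_add_inv_mul_le {x t : ℝ} (hx : 0 < x) (ht : 0 < t) (ht1 : t ≤ 1) :
    log (1 + 1 / (x * t)) ≤ log (1 / x) + log (1 + x) + log (1 / t) := by
  have hxt : 0 < x * t := by positivity
  calc log (1 + 1 / (x * t)) ≤ log ((1 + x) / (x * t)) := by
        gcongr
        rw [le_div_iff₀ hxt, add_mul, one_div_mul_cancel hxt.ne']
        nlinarith
    _ = _ := by
        rw [log_div (by positivity) hxt.ne', log_mul hx.ne' ht.ne', one_div, one_div, log_inv,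
          log_inv]
        ring

lemma sqrt_log_one_add_inv_mul_le {x t : ℝ} (hx : 0 < x) (hx1 : x ≤ 1) (ht : 0 < t)
    (ht1 : t ≤ 1) :
    √(log (1 + 1 / (x * t))) ≤ √(log (1 / x)) + √(log (1 + x)) + √(log (1 / t)) := by
  have hlx : 0 ≤ log (1 / x) := log_nonneg (one_le_one_div hx hx1)
  have hlt : 0 ≤ log (1 / t) := log_nonneg (one_le_one_div ht ht1)
  have hlx' : 0 ≤ log (1 + x) := log_nonneg (by linarith)
  calc √(log (1 + 1 / (x * t))) ≤ √(log (1 / x) + log (1 + x) + log (1 / t)) :=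
        sqrt_le_sqrt (log_one_add_inv_mul_le hx ht ht1)
    _ ≤ √(log (1 / x) + log (1 + x)) + √(log (1 / t)) :=
        sqrt_add_le_add_sqrt (by positivity) hlt
    _ ≤ _ := by gcongr; exact sqrt_add_le_add_sqrt hlx hlx'

lemma abs_mul_sqrt_log_inv_le (t : ℝ) : |t * √(log (1 / t))| ≤ 1 := by
  wlog ht : 0 < t generalizing t
  · rcases (not_lt.mp ht).eq_or_lt with rfl | ht'
    · simp
    · simpa [abs_mul, abs_of_neg ht', ← log_abs (1 / t), abs_div] using this (-t) (by linarith)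
  rw [abs_of_nonneg (by positivity)]
  have hlog := log_le_sub_one_of_pos (one_div_pos.mpr ht)
  have hsq : t ^ 2 * log (1 / t) ≤ 1 := by
    calc t ^ 2 * log (1 / t) ≤ t ^ 2 * (1 / t - 1) := by gcongr
      _ = t - t ^ 2 := by field_simp
      _ ≤ 1 := by nlinarith
  calc t * √(log (1 / t)) = √(t ^ 2 * log (1 / t)) := by
        rw [sqrt_mul (sq_nonneg t), sqrt_sq ht.le]
    _ ≤ 1 := sqrt_le_one.mpr hsq

lemma log_sin_mul_sin_div_sin_sq {a b c : ℝ} (ha : a ≠ 0) (hb : b ≠ 0) (hc : c ≠ 0)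
    (hsa : sin a ≠ 0) (hsb : sin b ≠ 0) (hsc : sin c ≠ 0) :
    log (sin a * sin b / sin c ^ 2) =
      log (sin a / a) + log (sin b / b) - 2 * log (sin c / c) + log (a * b / c ^ 2) := by
  have hsplit : sin a * sin b / sin c ^ 2 =
      sin a / a * (sin b / b) / (sin c / c) ^ 2 * (a * b / c ^ 2) := by
    field_simp
  rw [hsplit, log_mul (by positivity) (by positivity), log_div (by positivity) (by positivity),
    log_mul (by positivity) (by positivity), log_pow]
  push_cast
  ring

lemma abs_Ihat_sub_log_le {R x t : ℝ} (hR : ∀ y ∈ Ioc 0 x, |log (sin y / y)| ≤ R * y ^ 2)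
    (hx : 0 < x) (hxπ : x < π) (ht : 0 < t) (ht1 : t < 1) :
    |Ihat x t - log (1 / t ^ 2 - 1)| ≤ 3 / 2 * R * x ^ 2 := by
  have hR0 : 0 ≤ R :=
    nonneg_of_mul_nonneg_left ((abs_nonneg _).trans (hR x ⟨hx, le_rfl⟩)) (by positivity)
  have hsin : ∀ y ∈ Ioc 0 x, y ≠ 0 ∧ sin y ≠ 0 := fun y hy =>
    ⟨hy.1.ne', (sin_pos_of_pos_of_lt_pi hy.1 (hy.2.trans_lt hxπ)).ne'⟩
  have ha : x * (1 - t) / 2 ∈ Ioc 0 x := ⟨by nlinarith, by nlinarith⟩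
  have hb : x * (1 + t) / 2 ∈ Ioc 0 x := ⟨by nlinarith, by nlinarith⟩
  have hc : x * t / 2 ∈ Ioc 0 x := ⟨by positivity, by nlinarith⟩
  have hquot : x * (1 - t) / 2 * (x * (1 + t) / 2) / (x * t / 2) ^ 2 = 1 / t ^ 2 - 1 := by
    field_simp
    ring
  rw [Ihat, log_sin_mul_sin_div_sin_sq (hsin _ ha).1 (hsin _ hb).1 (hsin _ hc).1 (hsin _ ha).2
    (hsin _ hb).2 (hsin _ hc).2, hquot, add_sub_cancel_right]
  have hsum : R * (x * (1 - t) / 2) ^ 2 + R * (x * (1 + t) / 2) ^ 2 + 2 * (R * (x * t / 2) ^ 2)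
      ≤ 3 / 2 * R * x ^ 2 := by
    nlinarith [mul_nonneg (mul_nonneg hR0 (sq_nonneg x)) (by nlinarith : (0:ℝ) ≤ 1 - t ^ 2)]
  have hA := abs_le.mp (hR _ ha)
  have hB := abs_le.mp (hR _ hb)
  have hC := abs_le.mp (hR _ hc)
  rw [abs_le]
  constructor <;> linarith

lemma intervalIntegrable_log_one_div_sq_sub_one :
    IntervalIntegrable (fun t => log (1 / t ^ 2 - 1)) volume 0 1 := by
  have h₁ : IntervalIntegrable (fun t => log (1 - t)) volume 0 1 := by
    simpa using (intervalIntegral.intervalIntegrable_log' (a := 1) (b := 0)).comp_sub_left 1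
  have h₂ : IntervalIntegrable (fun t => log (1 + t)) volume 0 1 := by
    refine (ContinuousOn.log (by fun_prop) fun t ht => ?_).intervalIntegrable
    rw [uIcc_of_le zero_le_one] at ht
    linarith [ht.1]
  have h₃ := intervalIntegral.intervalIntegrable_log' (a := 0) (b := 1) |>.const_mul 2
  refine ((h₁.add h₂).sub h₃).congr_uIoo fun t ht => ?_
  obtain ⟨ht0, ht1⟩ : 0 < t ∧ t < 1 := by rwa [uIoo_of_le zero_le_one] at ht
  have hfactor : 1 / t ^ 2 - 1 = (1 - t) * (1 + t) / t ^ 2 := by field_simp; ring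
  simp only [hfactor]
  rw [log_div (by nlinarith) (by positivity), log_mul (by linarith) (by linarith), log_pow]
  push_cast
  ring

lemma intervalIntegrable_mul_sqrt_log_inv :
    IntervalIntegrable (fun t => t * √(log (1 / t))) volume 0 1 :=
  intervalIntegrable_const.mono_fun' (by fun_prop) (ae_of_all _ abs_mul_sqrt_log_inv_le)

lemma intervalIntegrable_abs_log_one_div_sq_sub_one_mul :
    IntervalIntegrable (fun t => |log (1 / t ^ 2 - 1)| * t) volume 0 1 :=
  intervalIntegrable_log_one_div_sq_sub_one.abs.mul_continuousOn continuousOn_id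

lemma intervalIntegrable_abs_log_one_div_sq_sub_one_mul_sqrt_log_inv :
    IntervalIntegrable (fun t => |log (1 / t ^ 2 - 1)| * t * √(log (1 / t))) volume 0 1 := by
  refine intervalIntegrable_log_one_div_sq_sub_one.abs.mono_fun' (by fun_prop)
    (ae_of_all _ fun t => ?_)
  dsimp only
  rw [Real.norm_eq_abs, mul_assoc, abs_mul (|_|), abs_abs]
  exact mul_le_of_le_one_right (abs_nonneg _) (abs_mul_sqrt_log_inv_le t)

lemma integral_abs_eq_of_hasDerivAt_of_nonneg_of_nonpos {f F : ℝ → ℝ} {a b c : ℝ}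
    (hac : a ≤ c) (hcb : c ≤ b) (hF : ContinuousOn F (Icc a b))
    (hderiv : ∀ x ∈ Ioo a b, HasDerivAt F (f x) x) (hint : IntervalIntegrable f volume a b)
    (hpos : ∀ x ∈ Icc a c, 0 ≤ f x) (hneg : ∀ x ∈ Icc c b, f x ≤ 0) :
    ∫ x in a..b, |f x| = 2 * F c - F a - F b := by
  have hint_ac : IntervalIntegrable f volume a c := hint.mono_set (by
    rw [uIcc_of_le hac, uIcc_of_le (hac.trans hcb)]; exact Icc_subset_Icc_right hcb)
  have hint_cb : IntervalIntegrable f volume c b := hint.mono_set (by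
    rw [uIcc_of_le hcb, uIcc_of_le (hac.trans hcb)]; exact Icc_subset_Icc_left hac)
  have habs_ac : ∀ x ∈ uIcc a c, |f x| = f x := fun x hx =>
    abs_of_nonneg (hpos x (by rwa [uIcc_of_le hac] at hx))
  have habs_cb : ∀ x ∈ uIcc c b, |f x| = -f x := fun x hx =>
    abs_of_nonpos (hneg x (by rwa [uIcc_of_le hcb] at hx))
  rw [← intervalIntegral.integral_add_adjacent_intervals hint_ac.abs hint_cb.abs,
    intervalIntegral.integral_congr habs_ac, intervalIntegral.integral_congr habs_cb,
    intervalIntegral.integral_neg,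
    intervalIntegral.integral_eq_sub_of_hasDerivAt_of_le hac (hF.mono (Icc_subset_Icc_right hcb))
      (fun x hx => hderiv x ⟨hx.1, hx.2.trans_le hcb⟩) hint_ac,
    intervalIntegral.integral_eq_sub_of_hasDerivAt_of_le hcb (hF.mono (Icc_subset_Icc_left hac))
      (fun x hx => hderiv x ⟨hac.trans_lt hx.1, hx.2⟩) hint_cb]
  ring

lemma hasDerivAt_binEntropy_sq_div_two {t : ℝ} (ht : 0 < t) (ht1 : t < 1) :
    HasDerivAt (fun t => binEntropy (t ^ 2) / 2) (log (1 / t ^ 2 - 1) * t) t := by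
  have hsq : t ^ 2 < 1 := by nlinarith
  refine (((hasDerivAt_binEntropy (p := t ^ 2) (by positivity) hsq.ne).comp (h := (· ^ 2)) t
    (hasDerivAt_pow 2 t)).div_const 2).congr_deriv ?_
  rw [show 1 / t ^ 2 - 1 = (1 - t ^ 2) / t ^ 2 by field_simp,
    log_div (by linarith) (by positivity)]
  push_cast
  ring

lemma integral_abs_log_one_div_sq_sub_one_mul :
    ∫ t in (0:ℝ)..1, |log (1 / t ^ 2 - 1)| * t = log 2 := by
  set c := √(2⁻¹ : ℝ)
  have hc2 : c ^ 2 = 2⁻¹ := sq_sqrt (by norm_num)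
  have hc0 : 0 ≤ c := sqrt_nonneg _
  have hc1 : c ≤ 1 := sqrt_le_one.mpr (by norm_num)
  have key := integral_abs_eq_of_hasDerivAt_of_nonneg_of_nonpos
    (f := fun t => log (1 / t ^ 2 - 1) * t) hc0 hc1 (by fun_prop)
    (fun t ht => hasDerivAt_binEntropy_sq_div_two ht.1 ht.2)
    (intervalIntegrable_log_one_div_sq_sub_one.mul_continuousOn continuousOn_id) ?_ ?_
  · rw [intervalIntegral.integral_congr (g := fun t => |log (1 / t ^ 2 - 1) * t|) fun t ht => by
      rw [uIcc_of_le zero_le_one] at ht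
      simp only [abs_mul, abs_of_nonneg ht.1], key, hc2, binEntropy_two_inv,
      zero_pow two_ne_zero, one_pow, binEntropy_zero, binEntropy_one]
    ring
  · rintro t ⟨ht0, htc⟩
    rcases ht0.eq_or_lt with rfl | ht0
    · simp
    refine mul_nonneg (log_nonneg ?_) ht0.le
    rw [le_sub_iff_add_le, le_div_iff₀ (by positivity)]
    nlinarith
  · rintro t ⟨hct, ht1⟩
    have ht0 : 0 < t := by nlinarith
    refine mul_nonpos_of_nonpos_of_nonneg (log_nonpos ?_ ?_) ht0.le
    · rw [sub_nonneg, le_div_iff₀ (by positivity)]; nlinarith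
    · rw [sub_le_iff_le_add, div_le_iff₀ (by positivity)]; nlinarith

lemma integral_mul_sqrt_log_inv : ∫ t in (0:ℝ)..1, t * √(log (1 / t)) = √(π / 2) / 4 := by
  have himage : (fun s : ℝ => exp (-s)) '' Ioi 0 = Ioo 0 1 := by
    rw [← Function.comp_def exp Neg.neg, image_comp, image_neg_Ioi, neg_zero, image_exp_Iio,
      exp_zero]
  have hsubst : ∀ s ∈ Ioi (0:ℝ), |exp (-s) * -1| • (exp (-s) * √(log (1 / exp (-s))))
      = s ^ (1 / 2 : ℝ) * exp (-2 * s ^ (1:ℝ)) := fun s _ => by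
    rw [one_div, ← exp_neg, neg_neg, log_exp, sqrt_eq_rpow, rpow_one, smul_eq_mul, mul_neg_one,
      abs_neg, abs_of_pos (exp_pos _), ← mul_assoc, ← exp_add]
    ring_nf
  have hGamma : Gamma (3 / 2) = √π / 2 := by
    rw [show (3 / 2 : ℝ) = 1 / 2 + 1 by norm_num, Gamma_add_one (by norm_num), Gamma_one_half_eq]
    ring
  rw [intervalIntegral.integral_of_le zero_le_one, integral_Ioc_eq_integral_Ioo, ← himage,
    integral_image_eq_integral_abs_deriv_smul measurableSet_Ioi
      (fun s _ => (hasDerivAt_neg s).exp.hasDerivWithinAt)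
      (exp_injective.comp neg_injective).injOn,
    setIntegral_congr_fun measurableSet_Ioi hsubst,
    integral_rpow_mul_exp_neg_mul_rpow one_pos (by norm_num) two_pos]
  norm_num [hGamma]
  rw [rpow_neg zero_le_two, show (3 / 2 : ℝ) = 1 + 1 / 2 by norm_num, rpow_add two_pos, rpow_one,
    ← sqrt_eq_rpow]
  field_simp
  norm_num

lemma integral_abs_Ihat_mul_le {R x : ℝ} (hR : ∀ y ∈ Ioc 0 x, |log (sin y / y)| ≤ R * y ^ 2)
    (hx : 0 < x) (hx1 : x < 1) :
    ∫ t in (0:ℝ)..1, |Ihat x t| * t * √(log (1 + 1 / (x * t))) ≤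
      (√(log (1 / x)) + √(log (1 + x))) * log 2 + c₁
        + 3 / 2 * R * x ^ 2 * ((√(log (1 / x)) + √(log (1 + x))) / 2 + √(π / 2) / 4) := by
  set A := √(log (1 / x)) + √(log (1 + x))
  set K := 3 / 2 * R * x ^ 2 with hK
  have hint₁ := intervalIntegrable_abs_log_one_div_sq_sub_one_mul.const_mul A
  have hint₂ := intervalIntegrable_abs_log_one_div_sq_sub_one_mul_sqrt_log_inv
  have hint₃ := (intervalIntegral.intervalIntegrable_id (μ := volume) (a := 0) (b := 1)).const_mul
    (K * A)
  have hint₄ := intervalIntegrable_mul_sqrt_log_inv.const_mul K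
  have hbound : ∀ t ∈ Ioo (0:ℝ) 1, |Ihat x t| * t * √(log (1 + 1 / (x * t))) ≤
      A * (|log (1 / t ^ 2 - 1)| * t) + |log (1 / t ^ 2 - 1)| * t * √(log (1 / t))
        + (K * A * t + K * (t * √(log (1 / t)))) := fun t ⟨ht0, ht1⟩ => by
    have hIhat : |Ihat x t| ≤ |log (1 / t ^ 2 - 1)| + K := by
      linarith [abs_sub_abs_le_abs_sub (Ihat x t) (log (1 / t ^ 2 - 1)),
        abs_Ihat_sub_log_le hR hx (hx1.trans (by linarith [pi_gt_three])) ht0 ht1, hK]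
    calc |Ihat x t| * t * √(log (1 + 1 / (x * t)))
        ≤ (|log (1 / t ^ 2 - 1)| + K) * t * (A + √(log (1 / t))) :=
          mul_le_mul (mul_le_mul_of_nonneg_right hIhat ht0.le)
            (sqrt_log_one_add_inv_mul_le hx hx1.le ht0 ht1.le) (sqrt_nonneg _)
            (mul_nonneg ((abs_nonneg _).trans hIhat) ht0.le)
      _ = _ := by ring
  calc ∫ t in (0:ℝ)..1, |Ihat x t| * t * √(log (1 + 1 / (x * t)))
      ≤ ∫ t in (0:ℝ)..1, A * (|log (1 / t ^ 2 - 1)| * t)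
          + |log (1 / t ^ 2 - 1)| * t * √(log (1 / t))
          + (K * A * t + K * (t * √(log (1 / t)))) := by
        simp only [intervalIntegral.integral_of_le zero_le_one, integral_Ioc_eq_integral_Ioo]
        refine integral_mono_of_nonneg (ae_restrict_of_forall_mem measurableSet_Ioo fun t ht => ?_)
          (((hint₁.add hint₂).add (hint₃.add hint₄)).1.mono_set Ioo_subset_Ioc_self)
          (ae_restrict_of_forall_mem measurableSet_Ioo hbound)
        have := ht.1
        positivity
    _ = _ := by
        rw [intervalIntegral.integral_add (hint₁.add hint₂) (hint₃.add hint₄),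
          intervalIntegral.integral_add hint₁ hint₂, intervalIntegral.integral_add hint₃ hint₄,
          intervalIntegral.integral_const_mul, intervalIntegral.integral_const_mul,
          intervalIntegral.integral_const_mul, integral_abs_log_one_div_sq_sub_one_mul, ← c₁,
          integral_id, integral_mul_sqrt_log_inv]
        ring

theorem stmt_7_general (ε : ℝ) (hε1 : ε < 1) (R₁ : ℝ)
    (hR₁' : ∀ y ∈ Ioc (0:ℝ) ε, |Real.log (Real.sin y / y)| ≤ R₁ * y ^ 2) :
    ∀ x ∈ Ioc (0:ℝ) ε,
      U₁ x / (-(x ^ 2 * Real.log x * Real.sqrt (Real.log (1 + 1 / x)))) ≤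
        (1 / Real.sqrt (Real.log (1 + 1 / x))) *
          (Real.log 2 / Real.sqrt (Real.log (1 / x))
            + (c₁ + Real.log 2 * Real.sqrt (Real.log (1 + x))) / Real.log (1 / x)
            + (3 * R₁ / 8) * x ^ 2 *
              (2 / Real.sqrt (Real.log (1 / x))
                + (Real.sqrt (Real.pi / 2) + 2 * Real.sqrt (Real.log (1 + x)))
                    / Real.log (1 / x))) := by
  rintro x ⟨hx, hxε⟩
  have hx1 : x < 1 := hxε.trans_lt hε1
  have hL : 0 < log (1 / x) := log_pos (one_lt_one_div hx hx1)
  have hM : 0 < √(log (1 + 1 / x)) := sqrt_pos.mpr (log_pos (by linarith [one_div_pos.mpr hx]))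
  have hsqL : √(log (1 / x)) ^ 2 = log (1 / x) := sq_sqrt hL.le
  have hsqL0 : 0 < √(log (1 / x)) := sqrt_pos.mpr hL
  calc U₁ x / (-(x ^ 2 * log x * √(log (1 + 1 / x))))
      = (∫ t in (0:ℝ)..1, |Ihat x t| * t * √(log (1 + 1 / (x * t))))
          / (log (1 / x) * √(log (1 + 1 / x))) := by
        rw [U₁, one_div x, log_inv]
        field_simp
    _ ≤ ((√(log (1 / x)) + √(log (1 + x))) * log 2 + c₁
        + 3 / 2 * R₁ * x ^ 2 * ((√(log (1 / x)) + √(log (1 + x))) / 2 + √(π / 2) / 4))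
          / (log (1 / x) * √(log (1 + 1 / x))) := by
        gcongr
        exact integral_abs_Ihat_mul_le (fun y hy => hR₁' y ⟨hy.1, hy.2.trans hxε⟩) hx hx1
    _ = _ := by
        generalize √(log (1 / x)) = s at hsqL hsqL0 ⊢
        rw [← hsqL]
        field_simp
        ring

/-- Asymptotic bound for `U₁(x)/(−x²·log x·√(log(1 + 1/x)))` on `(0, ε]`. -/
theorem stmt_7 (ε : ℝ) (hε : 0 < ε) (hε1 : ε < 1) (R₁ : ℝ) (hR₁ : 0 ≤ R₁)
    (hR₁' : ∀ y ∈ Ioc (0:ℝ) ε, |Real.log (Real.sin y / y)| ≤ R₁ * y ^ 2) :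
    ∀ x ∈ Ioc (0:ℝ) ε,
      U₁ x / (-(x ^ 2 * Real.log x * Real.sqrt (Real.log (1 + 1 / x)))) ≤
        (1 / Real.sqrt (Real.log (1 + 1 / x))) *
          (Real.log 2 / Real.sqrt (Real.log (1 / x))
            + (c₁ + Real.log 2 * Real.sqrt (Real.log (1 + x))) / Real.log (1 / x)
            + (3 * R₁ / 8) * x ^ 2 *
              (2 / Real.sqrt (Real.log (1 / x))
                + (Real.sqrt (Real.pi / 2) + 2 * Real.sqrt (Real.log (1 + x)))
                    / Real.log (1 / x))) :=
  stmt_7_general ε hε1 R₁ hR₁'
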